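/- If every proper subset S of Q of an n-state synchronizing strongly connected automaton is n-Extendable, then the automaton satisfies the Černý conjecture: it has a synchronizing word of length at most (n-1)². -/

import Mathlib

/-- Action of a word on a state of a DFA. -/
def act {Q A : Type*} (δ : Q → A → Q) (q : Q) (w : List A) : Q := w.foldl δ q

/-- Preimage `S·w⁻¹ = {q : q·w ∈ S}` of a subset under a word. -/
def preim {Q A : Type*} [Fintype Q] [DecidableEq Q] (δ : Q → A → Q)
    (S : Finset Q) (w : List A) : Finset Q :=
  Finset.univ.filter fun q => act δ q w ∈ S

/-!
A synchronizing automaton with at least two states has a letter `a` merging two states `x ≠ y`,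
so `{p}·a⁻¹` with `p = x·a` has at least two elements and is collapsed by the word `a`.
Each application of the extension hypothesis prepends a word of length at most `n` and enlarges
the collapsed set, so after at most `n - 2` steps the whole state set is collapsed, by a word of
length at most `1 + (n - 2) n = (n - 1)²`.
-/

section

variable {Q A : Type*} (δ : Q → A → Q)

@[simp]
lemma act_append (q : Q) (v w : List A) : act δ q (v ++ w) = act δ (act δ q v) w :=
  List.foldl_append

@[simp]
lemma mem_preim [Fintype Q] [DecidableEq Q] {S : Finset Q} {w : List A} {q : Q} :
    q ∈ preim δ S w ↔ act δ q w ∈ S := by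
  simp [preim]

@[simp]
lemma act_singleton (q : Q) (a : A) : act δ q [a] = δ q a := rfl

lemma two_le_card_preim_of_merge [Fintype Q] [DecidableEq Q] {a : A} {x y : Q} (hxy : x ≠ y)
    (hmerge : δ x a = δ y a) : 2 ≤ (preim δ {δ x a} [a]).card := by
  have hsub : {x, y} ⊆ preim δ {δ x a} [a] := by
    intro q hq
    rcases Finset.mem_insert.mp hq with rfl | hq
    · simp
    · simp [Finset.mem_singleton.mp hq, hmerge]
  simpa [Finset.card_pair hxy] using Finset.card_le_card hsub

lemma act_injective (h : ∀ a : A, Function.Injective fun q => δ q a) (w : List A) :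
    Function.Injective fun q => act δ q w := by
  induction w with
  | nil => exact Function.injective_id
  | cons a w ih => exact ih.comp (h a)

lemma exists_merging_letter [Nontrivial Q]
    (hsync : ∃ (w : List A) (p : Q), ∀ q : Q, act δ q w = p) :
    ∃ (a : A) (x y : Q), x ≠ y ∧ δ x a = δ y a := by
  by_contra! hinj
  obtain ⟨w, p, hw⟩ := hsync
  obtain ⟨x, y, hxy⟩ := exists_pair_ne Q
  exact hxy (act_injective δ (fun a _ _ => not_imp_not.mp (hinj a _ _)) w (by simp only [hw]))

lemma exists_sync_word_of_extendable [Fintype Q] [DecidableEq Q] (m : ℕ)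
    (hext : ∀ S : Finset Q, S.Nonempty → S ≠ Finset.univ →
      ∃ v : List A, v.length ≤ m ∧ S.card < (preim δ S v).card)
    (p : Q) (k : ℕ) (S : Finset Q) (w : List A) (hS : S.Nonempty)
    (hw : ∀ q ∈ S, act δ q w = p) (hk : Fintype.card Q ≤ S.card + k) :
    ∃ w' : List A, (∀ q : Q, act δ q w' = p) ∧ w'.length ≤ w.length + k * m := by
  induction k generalizing S w with
  | zero =>
    have hSu : S = Finset.univ := Finset.eq_univ_of_card S (by have := S.card_le_univ; omega)
    exact ⟨w, fun q => hw q (hSu ▸ Finset.mem_univ q), by simp⟩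
  | succ k ih =>
    by_cases hSu : S = Finset.univ
    · exact ⟨w, fun q => hw q (hSu ▸ Finset.mem_univ q), by omega⟩
    obtain ⟨v, hvm, hcard⟩ := hext S hS hSu
    have hS' : (preim δ S v).Nonempty := Finset.card_pos.mp (by omega)
    have hw' : ∀ q ∈ preim δ S v, act δ q (v ++ w) = p := fun q hq => by
      rw [act_append]; exact hw _ ((mem_preim δ).mp hq)
    obtain ⟨w', hsync, hlen⟩ := ih (preim δ S v) (v ++ w) hS' hw' (by omega)
    refine ⟨w', hsync, ?_⟩
    rw [List.length_append] at hlen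
    nlinarith

end

theorem stmt11_general {Q A : Type*} [Fintype Q] [DecidableEq Q] (δ : Q → A → Q)
    (n : ℕ) (hn : Fintype.card Q = n)
    (hsync : ∃ (w : List A) (p : Q), ∀ q : Q, act δ q w = p)
    (hext : ∀ S : Finset Q, S.Nonempty → S ≠ Finset.univ →
      ∃ v : List A, v.length ≤ n ∧ S.card < (preim δ S v).card) :
    ∃ (w : List A) (p : Q), (∀ q : Q, act δ q w = p) ∧
      w.length ≤ (n - 1) ^ 2 := by
  rcases Nat.lt_or_ge 1 n with hn2 | hn1
  · have : Nontrivial Q := Fintype.one_lt_card_iff_nontrivial.mp (hn ▸ hn2)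
    obtain ⟨a, x, y, hxy, hmerge⟩ := exists_merging_letter δ hsync
    have hpair := two_le_card_preim_of_merge δ hxy hmerge
    obtain ⟨w, hw, hlen⟩ := exists_sync_word_of_extendable δ n hext (δ x a) (n - 2)
      (preim δ {δ x a} [a]) [a] (Finset.card_pos.mp (by omega))
      (fun q hq => Finset.mem_singleton.mp ((mem_preim δ).mp hq)) (by omega)
    refine ⟨w, δ x a, hw, ?_⟩
    obtain ⟨m, rfl⟩ : ∃ m, n = m + 2 := ⟨n - 2, by omega⟩
    simp only [List.length_singleton, Nat.add_sub_cancel] at hlen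
    calc w.length ≤ 1 + m * (m + 2) := hlen
      _ = (m + 2 - 1) ^ 2 := by rw [show m + 2 - 1 = m + 1 by omega]; ring
  · obtain ⟨w, p, -⟩ := hsync
    exact ⟨[], p, fun q => Fintype.card_le_one_iff.mp (hn ▸ hn1) q p, by simp⟩

theorem stmt11 {Q A : Type*} [Fintype Q] [DecidableEq Q] (δ : Q → A → Q)
    (n : ℕ) (hn : Fintype.card Q = n)
    (hsync : ∃ (w : List A) (p : Q), ∀ q : Q, act δ q w = p)
    (hsc : ∀ p q : Q, ∃ u : List A, act δ p u = q)
    (hext : ∀ S : Finset Q, S.Nonempty → S ≠ Finset.univ →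
      ∃ v : List A, v.length ≤ n ∧ S.card < (preim δ S v).card) :
    ∃ (w : List A) (p : Q), (∀ q : Q, act δ q w = p) ∧
      w.length ≤ (n - 1) ^ 2 :=
  stmt11_general δ n hn hsync hext
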